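/- arXiv:1601.05360 — 3 statements merged into one kernel-verified Lean document; each statement's English description precedes it below -/
import Mathlib

section
/- The class GPVAL is closed under pointwise multiplication: if I ⊆ ℝ^d is open and connected and f : I → ℝ^e and g : I → ℝ^e both belong to GPVAL, then the componentwise product fg : I → ℝ^e, defined by (fg)(x) = (f₁(x)g₁(x),…,f_e(x)g_e(x)), belongs to GPVAL. -/
noncomputable section

/-- The continuous linear map `ℝ^d → ℝ^n` associated to an `n × d` real matrix. -/
def matLin {n d : ℕ} (M : Matrix (Fin n) (Fin d) ℝ) : (Fin d → ℝ) →L[ℝ] (Fin n → ℝ) :=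
  LinearMap.toContinuousLinearMap (Matrix.toLin' M)

/-- The class `GPVAL` of polynomially bounded generable functions on `I`. -/
def GPVAL {d e : ℕ} (I : Set (Fin d → ℝ)) (f : (Fin d → ℝ) → (Fin e → ℝ)) : Prop :=
  ∃ (sp : Polynomial ℝ) (n : ℕ) (hn : e ≤ n)
    (p : Matrix (Fin n) (Fin d) (MvPolynomial (Fin n) ℝ))
    (x₀ : Fin d → ℝ) (y₀ : Fin n → ℝ) (y : (Fin d → ℝ) → (Fin n → ℝ)),
    (∀ a : ℝ, 0 ≤ a → 0 ≤ sp.eval a) ∧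
    x₀ ∈ I ∧ y x₀ = y₀ ∧
    (∀ x ∈ I, HasFDerivAt y (matLin (fun i j => MvPolynomial.eval (y x) (p i j))) x) ∧
    (∀ x ∈ I, ∀ i : Fin e, f x i = y x (Fin.castLE hn i)) ∧
    (∀ x ∈ I, ‖y x‖ ≤ sp.eval ‖x‖)

/-!
If `y' = p(y)` and `z' = q(z)`, then the concatenation `(y, z)` solves the polynomial system
`(p, q)`, and by the product rule `(y_i z_i)' = y_i q_i(z) + z_i p_i(y)`, which is again a
polynomial in `(y, z)`. Prepending the products `y_i z_i` to `(y, z)` therefore gives a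
polynomial ODE whose first `e` coordinates are `f g`. Its solution is bounded by `S² + S` for
`S = sp₁ + sp₂`, since each coordinate is a coordinate of `y` or `z`, or a product of two.
-/

open MvPolynomial ContinuousLinearMap

section PolyODE

variable {d n m N e : ℕ} {I : Set (Fin d → ℝ)}

def SolvesPolyODE (I : Set (Fin d → ℝ)) (y : (Fin d → ℝ) → Fin n → ℝ)
    (p : Matrix (Fin n) (Fin d) (MvPolynomial (Fin n) ℝ)) : Prop :=
  ∀ x ∈ I, HasFDerivAt y (matLin fun i j => eval (y x) (p i j)) x

lemma proj_comp_matLin (M : Matrix (Fin n) (Fin d) ℝ) (i : Fin n) :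
    proj i ∘L matLin M = ∑ j, M i j • proj j := by
  ext v
  simp [matLin, Matrix.mulVec, dotProduct]

lemma solvesPolyODE_iff {y : (Fin d → ℝ) → Fin n → ℝ}
    {p : Matrix (Fin n) (Fin d) (MvPolynomial (Fin n) ℝ)} :
    SolvesPolyODE I y p ↔
      ∀ x ∈ I, ∀ i, HasFDerivAt (fun x => y x i)
        (∑ j, eval (y x) (p i j) • proj j : (Fin d → ℝ) →L[ℝ] ℝ) x := by
  refine forall₂_congr fun x _ => ?_
  rw [hasFDerivAt_pi']
  exact forall_congr' fun i => iff_of_eq (congrArg (HasFDerivAt _ · x) (proj_comp_matLin _ i))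

def appendSystem (p : Matrix (Fin n) (Fin d) (MvPolynomial (Fin n) ℝ))
    (q : Matrix (Fin m) (Fin d) (MvPolynomial (Fin m) ℝ)) :
    Matrix (Fin (n + m)) (Fin d) (MvPolynomial (Fin (n + m)) ℝ) :=
  Fin.append (fun i j => rename (Fin.castAdd m) (p i j)) (fun i j => rename (Fin.natAdd n) (q i j))

lemma SolvesPolyODE.append {y : (Fin d → ℝ) → Fin n → ℝ} {z : (Fin d → ℝ) → Fin m → ℝ}
    {p : Matrix (Fin n) (Fin d) (MvPolynomial (Fin n) ℝ)}
    {q : Matrix (Fin m) (Fin d) (MvPolynomial (Fin m) ℝ)}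
    (hy : SolvesPolyODE I y p) (hz : SolvesPolyODE I z q) :
    SolvesPolyODE I (fun x => Fin.append (y x) (z x)) (appendSystem p q) := by
  rw [solvesPolyODE_iff] at *
  intro x hx k
  refine Fin.addCases (fun i => ?_) (fun i => ?_) k
  · simpa [appendSystem, eval_rename, Function.comp_def] using hy x hx i
  · simpa [appendSystem, eval_rename, Function.comp_def] using hz x hx i

def prependProductsSystem (P : Matrix (Fin N) (Fin d) (MvPolynomial (Fin N) ℝ))
    (a b : Fin e → Fin N) : Matrix (Fin (e + N)) (Fin d) (MvPolynomial (Fin (e + N)) ℝ) :=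
  Fin.append
    (fun i j => rename (Fin.natAdd e) (X (a i) * P (b i) j + X (b i) * P (a i) j))
    (fun i j => rename (Fin.natAdd e) (P i j))

lemma SolvesPolyODE.prependProducts {w : (Fin d → ℝ) → Fin N → ℝ}
    {P : Matrix (Fin N) (Fin d) (MvPolynomial (Fin N) ℝ)}
    (hw : SolvesPolyODE I w P) (a b : Fin e → Fin N) :
    SolvesPolyODE I (fun x => Fin.append (fun i => w x (a i) * w x (b i)) (w x))
      (prependProductsSystem P a b) := by
  rw [solvesPolyODE_iff] at *
  intro x hx k
  refine Fin.addCases (fun i => ?_) (fun i => ?_) k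
  · have hmul := HasFDerivAt.mul (hw x hx (a i)) (hw x hx (b i))
    simp only [Fin.append_left]
    refine hmul.congr_fderiv ?_
    simp [prependProductsSystem, eval_rename, Function.comp_def, Finset.smul_sum, smul_smul,
      ← Finset.sum_add_distrib, add_smul]
  · simpa [prependProductsSystem, eval_rename, Function.comp_def] using hw x hx i

end PolyODE

section Norms

variable {n m e : ℕ}

lemma norm_finAppend_le {E : Type*} [SeminormedAddCommGroup E] {u : Fin n → E} {v : Fin m → E}
    {r : ℝ} (hu : ‖u‖ ≤ r) (hv : ‖v‖ ≤ r) : ‖Fin.append u v‖ ≤ r := by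
  refine (pi_norm_le_iff_of_nonneg ((norm_nonneg u).trans hu)).2 fun k => ?_
  refine Fin.addCases (fun i => ?_) (fun i => ?_) k
  · simpa using (norm_le_pi_norm u i).trans hu
  · simpa using (norm_le_pi_norm v i).trans hv

lemma norm_mul_comp_le_sq {R : Type*} [SeminormedRing R] (w : Fin n → R) (a b : Fin e → Fin n) :
    ‖fun i => w (a i) * w (b i)‖ ≤ ‖w‖ ^ 2 := by
  refine (pi_norm_le_iff_of_nonneg (sq_nonneg _)).2 fun i => ?_
  calc ‖w (a i) * w (b i)‖ ≤ ‖w (a i)‖ * ‖w (b i)‖ := norm_mul_le _ _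
    _ ≤ ‖w‖ ^ 2 := by
      rw [sq]
      exact mul_le_mul (norm_le_pi_norm w _) (norm_le_pi_norm w _) (norm_nonneg _) (norm_nonneg _)

end Norms

theorem gpval_mul_general {d e : ℕ} (I : Set (Fin d → ℝ))
    (f g : (Fin d → ℝ) → (Fin e → ℝ)) (hf : GPVAL I f) (hg : GPVAL I g) :
    GPVAL I (fun x i => f x i * g x i) := by
  obtain ⟨sp₁, n, hn, p, x₀, -, y, hsp₁, hx₀, -, hy, hfy, hby⟩ := hf
  obtain ⟨sp₂, m, hm, q, -, -, z, hsp₂, -, -, hz, hgz, hbz⟩ := hg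
  let a : Fin e → Fin (n + m) := fun i => Fin.castAdd m (Fin.castLE hn i)
  let b : Fin e → Fin (n + m) := fun i => Fin.natAdd n (Fin.castLE hm i)
  let w x := Fin.append (y x) (z x)
  let S := sp₁ + sp₂
  have hS : ∀ x ∈ I, ‖w x‖ ≤ S.eval ‖x‖ := fun x hx => by
    have := hsp₁ _ (norm_nonneg x)
    have := hsp₂ _ (norm_nonneg x)
    simp only [S, Polynomial.eval_add]
    exact norm_finAppend_le (by linarith [hby x hx]) (by linarith [hbz x hx])
  refine ⟨S ^ 2 + S, e + (n + m), Nat.le_add_right e _, prependProductsSystem (appendSystem p q) a b,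
    x₀, _, fun x => Fin.append (fun i => w x (a i) * w x (b i)) (w x), fun r hr => ?_, hx₀, rfl,
    SolvesPolyODE.prependProducts (SolvesPolyODE.append hy hz) a b, fun x hx i => ?_,
    fun x hx => ?_⟩
  · have := hsp₁ r hr
    have := hsp₂ r hr
    simp only [S, Polynomial.eval_add, Polynomial.eval_pow]
    positivity
  · simp [hfy x hx, hgz x hx, w, a, b]
  · have hw := hS x hx
    have hS₀ : 0 ≤ S.eval ‖x‖ := (norm_nonneg _).trans hw
    simp only [Polynomial.eval_add, Polynomial.eval_pow]
    refine norm_finAppend_le ?_ (hw.trans (le_add_of_nonneg_left (sq_nonneg _)))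
    calc _ ≤ ‖w x‖ ^ 2 := norm_mul_comp_le_sq _ a b
      _ ≤ S.eval ‖x‖ ^ 2 := pow_le_pow_left₀ (norm_nonneg _) hw 2
      _ ≤ _ := le_add_of_nonneg_right hS₀

/-- **`GPVAL` is closed under componentwise (pointwise) multiplication.** -/
theorem gpval_mul {d e : ℕ} (I : Set (Fin d → ℝ))
    (hIopen : IsOpen I) (hIconn : IsConnected I)
    (f g : (Fin d → ℝ) → (Fin e → ℝ)) (hf : GPVAL I f) (hg : GPVAL I g) :
    GPVAL I (fun x i => f x i * g x i) :=
  gpval_mul_general I f g hf hg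
end
end

section
/- The class GPVAL is closed under composition: if I ⊆ ℝ^d is open and connected, J ⊆ ℝ^e is open and connected, g : I → ℝ^e belongs to GPVAL with g(I) ⊆ J, and f : J → ℝ^m belongs to GPVAL, then the composition f ∘ g : I → ℝ^m belongs to GPVAL. -/
noncomputable section

/-!
Run the two generating systems side by side, with joint state `(z (g x), y x)`, where `g x` is
read off from `y x` as its first `e` coordinates. By the chain rule the Jacobian of `z (g x)` is
`q(z) · p(y)` restricted to those rows, again polynomial in the joint state. The polynomial bound
composes once both bounds are replaced by their coefficientwise absolute values, which are
monotone on `[0, ∞)`.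
-/

open MvPolynomial

def absMajorant (r : Polynomial ℝ) : Polynomial ℝ :=
  ∑ i ∈ r.support, Polynomial.C |r.coeff i| * Polynomial.X ^ i

lemma eval_absMajorant (r : Polynomial ℝ) (s : ℝ) :
    (absMajorant r).eval s = ∑ i ∈ r.support, |r.coeff i| * s ^ i := by
  simp [absMajorant, Polynomial.eval_finsetSum]

lemma absMajorant_eval_nonneg (r : Polynomial ℝ) {s : ℝ} (hs : 0 ≤ s) :
    0 ≤ (absMajorant r).eval s := by
  rw [eval_absMajorant]
  exact Finset.sum_nonneg fun i _ => by positivity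

lemma eval_le_absMajorant_eval (r : Polynomial ℝ) {t s : ℝ} (ht : 0 ≤ t) (hts : t ≤ s) :
    r.eval t ≤ (absMajorant r).eval s := by
  rw [eval_absMajorant, Polynomial.eval_eq_sum, Polynomial.sum_def]
  refine Finset.sum_le_sum fun i _ => ?_
  calc r.coeff i * t ^ i ≤ |r.coeff i| * t ^ i := by gcongr; exact le_abs_self _
    _ ≤ |r.coeff i| * s ^ i := by gcongr

lemma matLin_mul {l n d : ℕ} (A : Matrix (Fin l) (Fin n) ℝ) (B : Matrix (Fin n) (Fin d) ℝ) :
    matLin (A * B) = (matLin A).comp (matLin B) := by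
  ext1 v
  simp [matLin, Matrix.toLin'_mul]

lemma pi_norm_append_le {E : Type*} [SeminormedAddCommGroup E] {m n : ℕ}
    {a : Fin m → E} {b : Fin n → E} {c : ℝ} (ha : ‖a‖ ≤ c) (hb : ‖b‖ ≤ c) :
    ‖Fin.append a b‖ ≤ c := by
  refine (pi_norm_le_iff_of_nonneg ((norm_nonneg _).trans ha)).2 fun i => ?_
  induction i using Fin.addCases with
  | left i => simpa using (norm_le_pi_norm a i).trans ha
  | right i => simpa using (norm_le_pi_norm b i).trans hb

section Jacobian

variable {d e n N k : ℕ} {x : Fin d → ℝ}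

lemma HasFDerivAt.comp_reindex {y : (Fin d → ℝ) → Fin n → ℝ} {M : Matrix (Fin n) (Fin d) ℝ}
    (hy : HasFDerivAt y (matLin M) x) (σ : Fin k → Fin n) :
    HasFDerivAt (fun x => y x ∘ σ) (matLin (M.submatrix σ id)) x :=
  hasFDerivAt_pi'' fun i => hasFDerivAt_pi'.1 hy (σ i)

lemma HasFDerivAt.finAppend {u : (Fin d → ℝ) → Fin N → ℝ} {v : (Fin d → ℝ) → Fin n → ℝ}
    {A : Matrix (Fin N) (Fin d) ℝ} {B : Matrix (Fin n) (Fin d) ℝ}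
    (hu : HasFDerivAt u (matLin A) x) (hv : HasFDerivAt v (matLin B) x) :
    HasFDerivAt (fun x => Fin.append (u x) (v x))
      (matLin ((A.fromRows B).submatrix finSumFinEquiv.symm id)) x := by
  refine hasFDerivAt_pi'' fun i => ?_
  induction i using Fin.addCases with
  | left i =>
    simpa using (hasFDerivAt_pi'.1 hu i).congr_fderiv (by ext; simp [matLin, Matrix.mulVec])
  | right i =>
    simpa using (hasFDerivAt_pi'.1 hv i).congr_fderiv (by ext; simp [matLin, Matrix.mulVec])

def HasPolyJacobianOn (I : Set (Fin d → ℝ)) (y : (Fin d → ℝ) → Fin n → ℝ)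
    (p : Matrix (Fin n) (Fin d) (MvPolynomial (Fin n) ℝ)) : Prop :=
  ∀ x ∈ I, HasFDerivAt y (matLin (p.map (eval (y x)))) x

/-- By the chain rule, the Jacobian of `x ↦ (z (y x ∘ σ), y x)` is `q(z) · p(y)|_σ` stacked on
`p(y)`; both blocks are polynomial in the joint variables `(z, y)`. -/
def compJacobian (p : Matrix (Fin n) (Fin d) (MvPolynomial (Fin n) ℝ))
    (q : Matrix (Fin N) (Fin e) (MvPolynomial (Fin N) ℝ)) (σ : Fin e → Fin n) :
    Matrix (Fin (N + n)) (Fin d) (MvPolynomial (Fin (N + n)) ℝ) :=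
  ((q.map (rename (Fin.castAdd n)) * (p.submatrix σ id).map (rename (Fin.natAdd N))).fromRows
    (p.map (rename (Fin.natAdd N)))).submatrix finSumFinEquiv.symm id

lemma map_eval_compJacobian (p : Matrix (Fin n) (Fin d) (MvPolynomial (Fin n) ℝ))
    (q : Matrix (Fin N) (Fin e) (MvPolynomial (Fin N) ℝ)) (σ : Fin e → Fin n)
    (a : Fin N → ℝ) (b : Fin n → ℝ) :
    (compJacobian p q σ).map (eval (Fin.append a b)) =
      ((q.map (eval a) * (p.map (eval b)).submatrix σ id).fromRows
        (p.map (eval b))).submatrix finSumFinEquiv.symm id := by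
  ext i j
  induction i using Fin.addCases with
  | left i => simp [compJacobian, Matrix.mul_apply, eval_rename, Function.comp_def]
  | right i => simp [compJacobian, eval_rename, Function.comp_def]

theorem HasPolyJacobianOn.comp {I : Set (Fin d → ℝ)} {J : Set (Fin e → ℝ)}
    {y : (Fin d → ℝ) → Fin n → ℝ} {z : (Fin e → ℝ) → Fin N → ℝ}
    {p : Matrix (Fin n) (Fin d) (MvPolynomial (Fin n) ℝ)}
    {q : Matrix (Fin N) (Fin e) (MvPolynomial (Fin N) ℝ)}
    (hy : HasPolyJacobianOn I y p) (hz : HasPolyJacobianOn J z q) {σ : Fin e → Fin n}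
    (hyJ : ∀ x ∈ I, y x ∘ σ ∈ J) :
    HasPolyJacobianOn I (fun x => Fin.append (z (y x ∘ σ)) (y x)) (compJacobian p q σ) := by
  intro x hx
  rw [map_eval_compJacobian]
  refine HasFDerivAt.finAppend ?_ (hy x hx)
  rw [matLin_mul]
  exact (hz _ (hyJ x hx)).comp x ((hy x hx).comp_reindex σ)

end Jacobian

lemma norm_append_comp_le {d e n N : ℕ} {J : Set (Fin e → ℝ)} {y : (Fin d → ℝ) → Fin n → ℝ}
    {z : (Fin e → ℝ) → Fin N → ℝ} {sp sq : Polynomial ℝ} {σ : Fin e → Fin n} {x : Fin d → ℝ}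
    (hy : ‖y x‖ ≤ sp.eval ‖x‖) (hyJ : y x ∘ σ ∈ J) (hz : ∀ w ∈ J, ‖z w‖ ≤ sq.eval ‖w‖) :
    ‖Fin.append (z (y x ∘ σ)) (y x)‖ ≤
      ((absMajorant sq).comp (absMajorant sp) + absMajorant sp).eval ‖x‖ := by
  have hy' : ‖y x‖ ≤ (absMajorant sp).eval ‖x‖ :=
    hy.trans (eval_le_absMajorant_eval sp (norm_nonneg x) le_rfl)
  have hz' : ‖z (y x ∘ σ)‖ ≤ (absMajorant sq).eval ((absMajorant sp).eval ‖x‖) :=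
    (hz _ hyJ).trans
      (eval_le_absMajorant_eval sq (norm_nonneg _) ((pi_norm_comp_le _ _).trans hy'))
  have hsp := absMajorant_eval_nonneg sp (norm_nonneg x)
  rw [Polynomial.eval_add, Polynomial.eval_comp]
  exact pi_norm_append_le
    (hz'.trans (le_add_of_nonneg_right hsp))
    (hy'.trans (le_add_of_nonneg_left (absMajorant_eval_nonneg sq hsp)))

theorem gpval_comp_general {d e m : ℕ} (I : Set (Fin d → ℝ)) (J : Set (Fin e → ℝ))
    (g : (Fin d → ℝ) → (Fin e → ℝ)) (f : (Fin e → ℝ) → (Fin m → ℝ))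
    (hg : GPVAL I g) (hgJ : ∀ x ∈ I, g x ∈ J) (hf : GPVAL J f) :
    GPVAL I (f ∘ g) := by
  obtain ⟨sp, n, hn, p, x₀, -, y, -, hx₀, -, hy, hgy, hybd⟩ := hg
  obtain ⟨sq, N, hm, q, -, -, z, -, -, -, hz, hfz, hzbd⟩ := hf
  have hg_eq : ∀ x ∈ I, g x = y x ∘ Fin.castLE hn := fun x hx => funext (hgy x hx)
  have hyJ : ∀ x ∈ I, y x ∘ Fin.castLE hn ∈ J := fun x hx => hg_eq x hx ▸ hgJ x hx
  refine ⟨(absMajorant sq).comp (absMajorant sp) + absMajorant sp, N + n,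
    hm.trans (Nat.le_add_right N n), compJacobian p q (Fin.castLE hn), x₀, _,
    fun x => Fin.append (z (y x ∘ Fin.castLE hn)) (y x), fun a ha => ?_, hx₀, rfl,
    HasPolyJacobianOn.comp hy hz hyJ, fun x hx i => ?_,
    fun x hx => norm_append_comp_le (hybd x hx) (hyJ x hx) hzbd⟩
  · rw [Polynomial.eval_add, Polynomial.eval_comp]
    exact add_nonneg (absMajorant_eval_nonneg _ (absMajorant_eval_nonneg _ ha))
      (absMajorant_eval_nonneg _ ha)
  · rw [Function.comp_apply, hfz _ (hgJ x hx), hg_eq x hx]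
    exact (Fin.append_left _ _ (Fin.castLE hm i)).symm

/-- **`GPVAL` is closed under composition**: if `g ∈ GPVAL` on `I` with `g(I) ⊆ J` and
`f ∈ GPVAL` on `J`, then `f ∘ g ∈ GPVAL` on `I`. -/
theorem gpval_comp {d e m : ℕ} (I : Set (Fin d → ℝ)) (J : Set (Fin e → ℝ))
    (hIopen : IsOpen I) (hIconn : IsConnected I)
    (hJopen : IsOpen J) (hJconn : IsConnected J)
    (g : (Fin d → ℝ) → (Fin e → ℝ)) (f : (Fin e → ℝ) → (Fin m → ℝ))
    (hg : GPVAL I g) (hgJ : ∀ x ∈ I, g x ∈ J) (hf : GPVAL J f) :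
    GPVAL I (f ∘ g) :=
  gpval_comp_general I J g f hg hgJ hf
end
end

section
/- Generable functions on star domains are polynomial-length computable: let I ⊆ ℝ^d be open and connected and let f : I → ℝ^e belong to GPVAL, witnessed by data (sp, n, p, x₀, y₀, y) as in the definition of GPVAL. If I is star-shaped with respect to the base point x₀ (i.e., for every x ∈ I the segment [x₀, x] is contained in I), then f belongs to AP. -/
/-!
Follow the generable function along `γ s = expPath x₀ x s = x - e^{-s} (x - x₀)`, which runs
inside the segment `[x₀, x] ⊆ I` from `x₀` towards `x`. Since `γ' = e^{-s} (x - x₀)` and the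
Jacobian of `y` is `p(y)`, the state `(y (γ s), s, e^{-s}, x - x₀)` solves a polynomial ODE whose
initial value is polynomial in `x`. On the segment, `y` and hence `p(y)` are polynomially bounded
in `‖x‖`, so the speed of this state lies between `1` (the clock `s`) and a polynomial in `‖x‖`,
and by the mean value inequality `y (γ s)` approaches `f x = y x` like `e^{-s}` times a polynomial
in `‖x‖`. Length and time are therefore comparable, and time `μ + poly ‖x‖` buys precision
`e^{-μ}`.
-/

noncomputable section

/-- Evaluation of a vector of multivariate polynomials at a point. -/
def pEval {d e : ℕ} (p : Fin e → MvPolynomial (Fin d) ℝ) (x : Fin d → ℝ) : Fin e → ℝ :=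
  fun i => MvPolynomial.eval x (p i)

/-- Length of the solution curve of the PIVP `y' = p(y)` on `[0, t]`
(the sup norm of the derivative is integrated). -/
def pLen {d : ℕ} (p : Fin d → MvPolynomial (Fin d) ℝ) (y : ℝ → Fin d → ℝ) (t : ℝ) : ℝ :=
  ∫ s in (0:ℝ)..t, ‖pEval p (y s)‖

/-- `Ω : ℝ₊² → ℝ₊` is a polynomial function. -/
def IsPolyFun2 (Ω : ℝ → ℝ → ℝ) : Prop :=
  (∃ P : MvPolynomial (Fin 2) ℝ, ∀ a b : ℝ, Ω a b = MvPolynomial.eval ![a, b] P) ∧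
  ∀ a b : ℝ, 0 ≤ a → 0 ≤ b → 0 ≤ Ω a b

/-- The class `AP` of polynomial-length computable partial functions `f :⊆ ℝⁿ → ℝᵐ`
(`dom` is the domain of `f`). -/
def AP {n m : ℕ} (dom : Set (Fin n → ℝ)) (f : (Fin n → ℝ) → (Fin m → ℝ)) : Prop :=
  ∃ (d : ℕ) (hd : m ≤ d) (p : Fin d → MvPolynomial (Fin d) ℝ)
    (q : Fin d → MvPolynomial (Fin n) ℝ) (Ω : ℝ → ℝ → ℝ),
    IsPolyFun2 Ω ∧
    ∀ x ∈ dom, ∃ y : ℝ → Fin d → ℝ,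
      (y 0 = fun i => MvPolynomial.eval x (q i)) ∧
      (∀ t : ℝ, 0 ≤ t → HasDerivAt y (pEval p (y t)) t) ∧
      (∀ t : ℝ, 0 ≤ t → ∀ μ : ℝ, 0 ≤ μ → Ω ‖x‖ μ ≤ pLen p y t →
        ‖(fun i : Fin m => y t (Fin.castLE hd i)) - f x‖ ≤ Real.exp (-μ)) ∧
      (∀ t : ℝ, 0 ≤ t → t ≤ pLen p y t)

open MvPolynomial

theorem MvPolynomial.abs_eval_le_sum_abs_coeff_mul {σ : Type*} [Fintype σ]
    (P : MvPolynomial σ ℝ) (v : σ → ℝ) :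
    |eval v P| ≤ (∑ m ∈ P.support, |coeff m P|) * (1 + ‖v‖) ^ P.totalDegree := by
  rw [eval_eq, Finset.sum_mul]
  refine (Finset.abs_sum_le_sum_abs _ _).trans (Finset.sum_le_sum fun m hm => ?_)
  rw [abs_mul]
  refine mul_le_mul_of_nonneg_left ?_ (abs_nonneg _)
  calc |∏ i ∈ m.support, v i ^ m i| = ∏ i ∈ m.support, |v i| ^ m i := by
        simp [Finset.abs_prod, abs_pow]
    _ ≤ ∏ i ∈ m.support, (1 + ‖v‖) ^ m i := by
        gcongr with i
        exact (norm_le_pi_norm v i).trans (le_add_of_nonneg_left zero_le_one)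
    _ = (1 + ‖v‖) ^ m.degree := by rw [Finset.prod_pow_eq_pow_sum]; rfl
    _ ≤ (1 + ‖v‖) ^ P.totalDegree :=
        pow_le_pow_right₀ (le_add_of_nonneg_right (norm_nonneg v)) (le_totalDegree hm)

theorem MvPolynomial.exists_abs_eval_le {ι σ : Type*} [Fintype ι] [Fintype σ]
    (P : ι → MvPolynomial σ ℝ) :
    ∃ (K : ℝ) (N : ℕ), 0 ≤ K ∧ ∀ i v, |eval v (P i)| ≤ K * (1 + ‖v‖) ^ N := by
  refine ⟨∑ i, ∑ m ∈ (P i).support, |coeff m (P i)|, Finset.univ.sup fun i => (P i).totalDegree,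
    by positivity, fun i v => (abs_eval_le_sum_abs_coeff_mul (P i) v).trans ?_⟩
  gcongr
  · exact Finset.single_le_sum (f := fun i => ∑ m ∈ (P i).support, |coeff m (P i)|)
      (fun j _ => by positivity) (Finset.mem_univ i)
  · exact le_add_of_nonneg_right (norm_nonneg v)
  · exact Finset.le_sup (f := fun i => (P i).totalDegree) (Finset.mem_univ i)

theorem Polynomial.exists_abs_eval_le (q : Polynomial ℝ) :
    ∃ (K : ℝ) (N : ℕ), 0 ≤ K ∧ ∀ a, |q.eval a| ≤ K * (1 + |a|) ^ N := by
  obtain ⟨K, N, hK, hq⟩ := MvPolynomial.exists_abs_eval_le fun _ : Unit => q.toMvPolynomial ()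
  refine ⟨K, N, hK, fun a => ?_⟩
  simpa using hq () fun _ => a

theorem one_add_le_one_add_mul_pow {a b K : ℝ} {N : ℕ} (ha : 0 ≤ a)
    (h : b ≤ K * (1 + a) ^ N) : 1 + b ≤ (1 + K) * (1 + a) ^ N := by
  have : 1 ≤ (1 + a) ^ N := one_le_pow₀ (by linarith)
  nlinarith

theorem matLin_apply {n d : ℕ} (M : Matrix (Fin n) (Fin d) ℝ) (v : Fin d → ℝ) (i : Fin n) :
    matLin M v i = ∑ j, M i j * v j := by
  simp [matLin, Matrix.toLin'_apply, Matrix.mulVec, dotProduct]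

theorem norm_matLin_le {n d : ℕ} {M : Matrix (Fin n) (Fin d) ℝ} {C : ℝ} (hC : 0 ≤ C)
    (hM : ∀ i j, |M i j| ≤ C) : ‖matLin M‖ ≤ d * C := by
  refine ContinuousLinearMap.opNorm_le_bound _ (by positivity) fun v => ?_
  refine (pi_norm_le_iff_of_nonneg (by positivity)).2 fun i => ?_
  calc ‖matLin M v i‖ = |∑ j, M i j * v j| := by rw [matLin_apply, Real.norm_eq_abs]
    _ ≤ ∑ j, |M i j| * |v j| := by
        simpa only [abs_mul] using Finset.abs_sum_le_sum_abs (fun j => M i j * v j) Finset.univ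
    _ ≤ ∑ _j : Fin d, C * ‖v‖ := by
        gcongr with j
        exacts [hM i j, norm_le_pi_norm v j]
    _ = d * C * ‖v‖ := by simp [mul_assoc]

theorem norm_sub_le_one_add_mul_one_add {E : Type*} [SeminormedAddCommGroup E] (x x₀ : E) :
    ‖x - x₀‖ ≤ (1 + ‖x₀‖) * (1 + ‖x‖) := by
  nlinarith [norm_sub_le x x₀, norm_nonneg x, norm_nonneg x₀]

theorem one_add_norm_le_of_mem_segment {E : Type*} [NormedAddCommGroup E] [NormedSpace ℝ E]
    {x₀ x z : E} (hz : z ∈ segment ℝ x₀ x) : 1 + ‖z‖ ≤ (1 + ‖x₀‖) * (1 + ‖x‖) := by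
  have hz_max := (convexOn_norm (convex_univ (𝕜 := ℝ) (E := E))).le_on_segment
    (Set.mem_univ x₀) (Set.mem_univ x) hz
  have hmax := max_le_add_of_nonneg (norm_nonneg x₀) (norm_nonneg x)
  nlinarith [mul_nonneg (norm_nonneg x₀) (norm_nonneg x)]

theorem exists_norm_jacobian_le {d n : ℕ} {S : Set (Fin d → ℝ)} (sp : Polynomial ℝ)
    (p : Matrix (Fin n) (Fin d) (MvPolynomial (Fin n) ℝ)) {y : (Fin d → ℝ) → Fin n → ℝ}
    (hbound : ∀ z ∈ S, ‖y z‖ ≤ sp.eval ‖z‖) :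
    ∃ (K : ℝ) (N : ℕ), 0 ≤ K ∧ ∀ z ∈ S,
      ‖matLin (p.map (eval (y z)))‖ ≤ K * (1 + ‖z‖) ^ N := by
  obtain ⟨K₁, N₁, hK₁, hsp⟩ := sp.exists_abs_eval_le
  obtain ⟨K₂, N₂, hK₂, hp⟩ := MvPolynomial.exists_abs_eval_le fun ij : Fin n × Fin d => p ij.1 ij.2
  refine ⟨d * (K₂ * (1 + K₁) ^ N₂), N₁ * N₂, by positivity, fun z hz => ?_⟩
  have hy : 1 + ‖y z‖ ≤ (1 + K₁) * (1 + ‖z‖) ^ N₁ :=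
    one_add_le_one_add_mul_pow (norm_nonneg z) <| (hbound z hz).trans <|
      (le_abs_self _).trans (by simpa using hsp ‖z‖)
  rw [mul_assoc]
  refine norm_matLin_le (by positivity) fun i j => (hp (i, j) (y z)).trans ?_
  calc K₂ * (1 + ‖y z‖) ^ N₂ ≤ K₂ * ((1 + K₁) * (1 + ‖z‖) ^ N₁) ^ N₂ := by gcongr
    _ = K₂ * (1 + K₁) ^ N₂ * (1 + ‖z‖) ^ (N₁ * N₂) := by rw [mul_pow, pow_mul, mul_assoc]

theorem continuous_pEval {d e : ℕ} (p : Fin e → MvPolynomial (Fin d) ℝ) : Continuous (pEval p) :=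
  continuous_pi fun i => continuous_eval (p i)

section Length

variable {D : ℕ} {P : Fin D → MvPolynomial (Fin D) ℝ} {Y : ℝ → Fin D → ℝ} {t L : ℝ}

theorem intervalIntegrable_norm_pEval (hY : ∀ s, 0 ≤ s → HasDerivAt Y (pEval P (Y s)) s)
    (ht : 0 ≤ t) : IntervalIntegrable (fun s => ‖pEval P (Y s)‖) MeasureTheory.volume 0 t := by
  refine ContinuousOn.intervalIntegrable fun s hs => ?_
  rw [Set.uIcc_of_le ht] at hs
  exact ((continuous_pEval P).continuousAt.comp (hY s hs.1).continuousAt).norm.continuousWithinAt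

theorem mul_le_pLen (hY : ∀ s, 0 ≤ s → HasDerivAt Y (pEval P (Y s)) s) (ht : 0 ≤ t)
    (hL : ∀ s ∈ Set.Icc 0 t, L ≤ ‖pEval P (Y s)‖) : L * t ≤ pLen P Y t := by
  simpa [pLen, mul_comm] using
    intervalIntegral.integral_mono_on ht intervalIntegrable_const
      (intervalIntegrable_norm_pEval hY ht) hL

theorem pLen_le_mul (hY : ∀ s, 0 ≤ s → HasDerivAt Y (pEval P (Y s)) s) (ht : 0 ≤ t)
    (hL : ∀ s ∈ Set.Icc 0 t, ‖pEval P (Y s)‖ ≤ L) : pLen P Y t ≤ L * t := by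
  simpa [pLen, mul_comm] using
    intervalIntegral.integral_mono_on ht (intervalIntegrable_norm_pEval hY ht)
      intervalIntegrable_const hL

end Length

theorem mul_exp_neg_le_exp_neg {C t μ : ℝ} (h : μ + C ≤ t) :
    C * Real.exp (-t) ≤ Real.exp (-μ) :=
  calc C * Real.exp (-t) ≤ Real.exp C * Real.exp (-t) := by
        gcongr; linarith [Real.add_one_le_exp C]
    _ ≤ Real.exp (-μ) := by rw [← Real.exp_add]; gcongr; linarith

theorem ap_of_exp_convergence {n m D : ℕ} (hm : m ≤ D) {dom : Set (Fin n → ℝ)}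
    {f : (Fin n → ℝ) → Fin m → ℝ} (P : Fin D → MvPolynomial (Fin D) ℝ)
    (Q : Fin D → MvPolynomial (Fin n) ℝ) {K : ℝ} {N : ℕ} (hK : 0 ≤ K)
    (hsol : ∀ x ∈ dom, ∃ Y : ℝ → Fin D → ℝ, Y 0 = (fun i => eval x (Q i)) ∧
      (∀ t, 0 ≤ t → HasDerivAt Y (pEval P (Y t)) t) ∧
      (∀ t, 0 ≤ t → 1 ≤ ‖pEval P (Y t)‖ ∧ ‖pEval P (Y t)‖ ≤ K * (1 + ‖x‖) ^ N + 1) ∧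
      (∀ t, 0 ≤ t →
        ‖(fun i => Y t (Fin.castLE hm i)) - f x‖ ≤ K * (1 + ‖x‖) ^ N * Real.exp (-t))) :
    AP dom f := by
  let C : ℝ → ℝ := fun a => K * (1 + a) ^ N
  -- Length `(C + 1) (μ + C)` forces time `μ + C`, where the error is below `e^{-μ}`.
  refine ⟨D, hm, P, Q, fun a μ => (C a + 1) * (μ + C a),
    ⟨⟨(MvPolynomial.C K * (1 + X 0) ^ N + 1) * (X 1 + MvPolynomial.C K * (1 + X 0) ^ N),
      fun a b => by simp [C]⟩, fun a μ ha hμ => by positivity⟩, fun x hx => ?_⟩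
  obtain ⟨Y, hY0, hY, hspeed, herr⟩ := hsol x hx
  refine ⟨Y, hY0, hY, fun t ht μ _ hΩ => (herr t ht).trans (mul_exp_neg_le_exp_neg ?_),
    fun t ht => ?_⟩
  · have hΩt := hΩ.trans (pLen_le_mul hY ht fun s hs => (hspeed s hs.1).2)
    exact le_of_mul_le_mul_left hΩt (by positivity)
  · simpa using mul_le_pLen hY ht fun s hs => (hspeed s hs.1).1

theorem HasDerivAt.finAppend {E : Type*} [NormedAddCommGroup E] [NormedSpace ℝ E] {k l : ℕ}
    {φ : ℝ → Fin k → E} {ψ : ℝ → Fin l → E} {φ' : Fin k → E} {ψ' : Fin l → E} {t : ℝ}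
    (hφ : HasDerivAt φ φ' t) (hψ : HasDerivAt ψ ψ' t) :
    HasDerivAt (fun s => Fin.append (φ s) (ψ s)) (Fin.append φ' ψ') t :=
  hasDerivAt_pi.2 fun i => Fin.addCases (by simpa using hasDerivAt_pi.1 hφ ·)
    (by simpa using hasDerivAt_pi.1 hψ ·) i

section ExpPath

variable {E : Type*} [NormedAddCommGroup E] [NormedSpace ℝ E] (x₀ x : E)

def expPath (s : ℝ) : E := x - Real.exp (-s) • (x - x₀)

theorem expPath_zero : expPath x₀ x 0 = x₀ := by simp [expPath]

theorem sub_expPath (s : ℝ) : x - expPath x₀ x s = Real.exp (-s) • (x - x₀) := sub_sub_cancel _ _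

theorem expPath_mem_segment {s : ℝ} (hs : 0 ≤ s) : expPath x₀ x s ∈ segment ℝ x₀ x := by
  refine ⟨Real.exp (-s), 1 - Real.exp (-s), (Real.exp_pos _).le, ?_, by ring, ?_⟩
  · linarith [Real.exp_le_one_iff.2 (neg_nonpos.2 hs)]
  · simp only [expPath, smul_sub, sub_smul, one_smul]; abel

theorem hasDerivAt_expPath (s : ℝ) :
    HasDerivAt (expPath x₀ x) (Real.exp (-s) • (x - x₀)) s := by
  show HasDerivAt (fun s => x - Real.exp (-s) • (x - x₀)) _ s
  simpa using ((hasDerivAt_neg s).exp.smul_const (x - x₀)).const_sub x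

end ExpPath

section PathSystem

variable {d n : ℕ}

/-- On the state `(y, s, e^{-s}, x - x₀)`, this is the system `y' = p(y) (e^{-s} (x - x₀))`,
`s' = 1`, `(e^{-s})' = -e^{-s}`, `(x - x₀)' = 0` solved by `y ∘ expPath x₀ x`. -/
def pathSystem (p : Matrix (Fin n) (Fin d) (MvPolynomial (Fin n) ℝ)) :
    Fin (n + (d + 2)) → MvPolynomial (Fin (n + (d + 2))) ℝ :=
  Fin.append
    (fun i => ∑ j, rename (Fin.castAdd (d + 2)) (p i j) *
      (X (Fin.natAdd n 1) * X (Fin.natAdd n j.succ.succ)))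
    (Fin.cons 1 (Fin.cons (-X (Fin.natAdd n 1)) 0))

def pathInit (y₀ : Fin n → ℝ) (x₀ : Fin d → ℝ) : Fin (n + (d + 2)) → MvPolynomial (Fin d) ℝ :=
  Fin.append (fun i => MvPolynomial.C (y₀ i))
    (Fin.cons 0 (Fin.cons 1 fun j => X j - MvPolynomial.C (x₀ j)))

def pathSolution (y : (Fin d → ℝ) → Fin n → ℝ) (x₀ x : Fin d → ℝ) (s : ℝ) :
    Fin (n + (d + 2)) → ℝ :=
  Fin.append (y (expPath x₀ x s)) (Fin.cons s (Fin.cons (Real.exp (-s)) (x - x₀)))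

variable (p : Matrix (Fin n) (Fin d) (MvPolynomial (Fin n) ℝ)) (y : (Fin d → ℝ) → Fin n → ℝ)
  (x₀ x : Fin d → ℝ)

theorem pathSolution_zero : pathSolution y x₀ x 0 = fun i => eval x (pathInit (y x₀) x₀ i) := by
  funext k
  refine Fin.addCases (fun i => ?_) (fun i => ?_) k
  · simp [pathSolution, pathInit, expPath_zero]
  · refine Fin.cases ?_ (Fin.cases ?_ fun j => ?_) i <;> simp [pathSolution, pathInit]

theorem pEval_pathSystem (s : ℝ) :
    pEval (pathSystem p) (pathSolution y x₀ x s) =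
      Fin.append (matLin (p.map (eval (y (expPath x₀ x s))))
        (Real.exp (-s) • (x - x₀))) (Fin.cons 1 (Fin.cons (-Real.exp (-s)) 0)) := by
  funext k
  refine Fin.addCases (fun i => ?_) (fun i => ?_) k
  · rw [Fin.append_left, matLin_apply]
    simp only [pEval, pathSystem, pathSolution, Fin.append_left, map_sum, map_mul, eval_rename,
      Function.comp_def, eval_X, Fin.append_right, Fin.cons_one, Fin.cons_zero, Fin.cons_succ,
      Pi.smul_apply, Pi.sub_apply, smul_eq_mul, Matrix.map_apply]
  · refine Fin.cases ?_ (Fin.cases ?_ fun j => ?_) i <;> simp [pEval, pathSystem, pathSolution]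

theorem pathSolution_castLE {e : ℕ} (hn : e ≤ n) (s : ℝ) (i : Fin e) :
    pathSolution y x₀ x s (Fin.castLE (hn.trans (Nat.le_add_right n (d + 2))) i) =
      y (expPath x₀ x s) (Fin.castLE hn i) :=
  Fin.append_left _ _ (Fin.castLE hn i)

theorem hasDerivAt_pathSolution {t : ℝ}
    (hy : HasFDerivAt y (matLin (p.map (eval (y (expPath x₀ x t))))) (expPath x₀ x t)) :
    HasDerivAt (pathSolution y x₀ x) (pEval (pathSystem p) (pathSolution y x₀ x t)) t := by
  rw [pEval_pathSystem]
  have hexp : HasDerivAt (fun s => Real.exp (-s)) (-Real.exp (-t)) t := by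
    simpa using (hasDerivAt_neg t).exp
  exact (hy.comp_hasDerivAt t (hasDerivAt_expPath x₀ x t)).finAppend <|
    (hasDerivAt_id t).finCons <| hexp.finCons (hasDerivAt_const t (x - x₀))

theorem one_le_norm_pEval_pathSystem (s : ℝ) :
    1 ≤ ‖pEval (pathSystem p) (pathSolution y x₀ x s)‖ := by
  simpa [pEval_pathSystem] using
    norm_le_pi_norm (pEval (pathSystem p) (pathSolution y x₀ x s)) (Fin.natAdd n 0)

theorem norm_pEval_pathSystem_le {L : ℝ}
    (hL : ∀ z ∈ segment ℝ x₀ x, ‖matLin (p.map (eval (y z)))‖ ≤ L) {s : ℝ} (hs : 0 ≤ s) :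
    ‖pEval (pathSystem p) (pathSolution y x₀ x s)‖ ≤ L * ‖x - x₀‖ + 1 := by
  have hL₀ : 0 ≤ L := (norm_nonneg _).trans (hL x₀ (left_mem_segment ℝ x₀ x))
  have hLc : 0 ≤ L * ‖x - x₀‖ := by positivity
  have hexp : Real.exp (-s) ≤ 1 := Real.exp_le_one_iff.2 (neg_nonpos.2 hs)
  rw [pEval_pathSystem, pi_norm_le_iff_of_nonneg (by positivity)]
  refine Fin.addCases (fun i => ?_) (fun i => ?_)
  · rw [Fin.append_left]
    calc ‖matLin (p.map (eval (y (expPath x₀ x s)))) (Real.exp (-s) • (x - x₀)) i‖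
        ≤ ‖matLin (p.map (eval (y (expPath x₀ x s))))‖ * ‖Real.exp (-s) • (x - x₀)‖ :=
          (norm_le_pi_norm _ i).trans (ContinuousLinearMap.le_opNorm _ _)
      _ ≤ L * ‖x - x₀‖ := by
          rw [norm_smul, Real.norm_of_nonneg (Real.exp_pos _).le]
          exact mul_le_mul (hL _ (expPath_mem_segment x₀ x hs))
            (mul_le_of_le_one_left (norm_nonneg _) hexp) (by positivity) hL₀
      _ ≤ L * ‖x - x₀‖ + 1 := by linarith
  · rw [Fin.append_right]
    refine Fin.cases ?_ (Fin.cases ?_ fun j => ?_) i <;>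
      simp [abs_of_pos (Real.exp_pos _)] <;> linarith

theorem norm_apply_expPath_sub_le {L : ℝ}
    (hL : ∀ z ∈ segment ℝ x₀ x, ‖matLin (p.map (eval (y z)))‖ ≤ L)
    (hy : ∀ z ∈ segment ℝ x₀ x, HasFDerivAt y (matLin (p.map (eval (y z)))) z) {t : ℝ}
    (ht : 0 ≤ t) : ‖y (expPath x₀ x t) - y x‖ ≤ L * ‖x - x₀‖ * Real.exp (-t) := by
  rw [norm_sub_rev]
  calc ‖y x - y (expPath x₀ x t)‖ ≤ L * ‖x - expPath x₀ x t‖ :=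
        (convex_segment x₀ x).norm_image_sub_le_of_norm_hasFDerivWithin_le
          (fun z hz => (hy z hz).hasFDerivWithinAt) hL (expPath_mem_segment x₀ x ht)
          (right_mem_segment ℝ x₀ x)
    _ = L * ‖x - x₀‖ * Real.exp (-t) := by
        rw [sub_expPath, norm_smul, Real.norm_of_nonneg (Real.exp_pos _).le]; ring

end PathSystem

theorem gpval_star_domain_mem_ap_general {d e n : ℕ} (hn : e ≤ n)
    (I : Set (Fin d → ℝ))
    (f : (Fin d → ℝ) → (Fin e → ℝ))
    (sp : Polynomial ℝ)
    (p : Matrix (Fin n) (Fin d) (MvPolynomial (Fin n) ℝ))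
    (x₀ : Fin d → ℝ) (y₀ : Fin n → ℝ)
    (y : (Fin d → ℝ) → (Fin n → ℝ))
    (hinit : y x₀ = y₀)
    (hjac : ∀ x ∈ I, HasFDerivAt y (matLin (fun i j => MvPolynomial.eval (y x) (p i j))) x)
    (hval : ∀ x ∈ I, ∀ i : Fin e, f x i = y x (Fin.castLE hn i))
    (hbound : ∀ x ∈ I, ‖y x‖ ≤ sp.eval ‖x‖)
    (hstar : ∀ x ∈ I, segment ℝ x₀ x ⊆ I) :
    AP I f := by
  obtain ⟨K, N, hK, hJ⟩ := exists_norm_jacobian_le sp p hbound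
  have hL : ∀ x ∈ I, ∀ z ∈ segment ℝ x₀ x,
      ‖matLin (p.map (eval (y z)))‖ ≤ K * ((1 + ‖x₀‖) * (1 + ‖x‖)) ^ N := fun x hx z hz =>
    (hJ z (hstar x hx hz)).trans (by gcongr; exact one_add_norm_le_of_mem_segment hz)
  have hC : ∀ x, K * ((1 + ‖x₀‖) * (1 + ‖x‖)) ^ N * ‖x - x₀‖ ≤
      K * (1 + ‖x₀‖) ^ (N + 1) * (1 + ‖x‖) ^ (N + 1) := fun x =>
    (mul_le_mul_of_nonneg_left (norm_sub_le_one_add_mul_one_add x x₀) (by positivity)).trans_eq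
      (by rw [mul_pow]; ring)
  refine ap_of_exp_convergence (hn.trans (Nat.le_add_right n (d + 2))) (pathSystem p)
    (pathInit y₀ x₀) (N := N + 1) (by positivity : 0 ≤ K * (1 + ‖x₀‖) ^ (N + 1)) fun x hx =>
      ⟨pathSolution y x₀ x, by rw [pathSolution_zero, hinit], fun t ht => ?_,
        fun t ht => ⟨one_le_norm_pEval_pathSystem p y x₀ x t, ?_⟩, fun t ht => ?_⟩
  · exact hasDerivAt_pathSolution p y x₀ x (hjac _ (hstar x hx (expPath_mem_segment x₀ x ht)))
  · exact (norm_pEval_pathSystem_le p y x₀ x (hL x hx) ht).trans (by linarith [hC x])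
  · have herr :=
      norm_apply_expPath_sub_le p y x₀ x (hL x hx) (fun z hz => hjac z (hstar x hx hz)) ht
    refine (pi_norm_le_iff_of_nonneg (by positivity)).2 fun i => ?_
    rw [Pi.sub_apply, pathSolution_castLE, hval x hx]
    exact (norm_le_pi_norm (y (expPath x₀ x t) - y x) _).trans
      (herr.trans (mul_le_mul_of_nonneg_right (hC x) (Real.exp_pos _).le))

/-- **Generable functions on star domains are polynomial-length computable.**
If `f ∈ GPVAL` on `I`, witnessed by data `(sp, n, p, x₀, y₀, y)`, and `I` is
star-shaped with respect to the base point `x₀`, then `f ∈ AP` (with domain `I`). -/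
theorem gpval_star_domain_mem_ap {d e n : ℕ} (hn : e ≤ n)
    (I : Set (Fin d → ℝ)) (hIopen : IsOpen I) (hIconn : IsConnected I)
    (f : (Fin d → ℝ) → (Fin e → ℝ))
    (sp : Polynomial ℝ) (hsp : ∀ a : ℝ, 0 ≤ a → 0 ≤ sp.eval a)
    (p : Matrix (Fin n) (Fin d) (MvPolynomial (Fin n) ℝ))
    (x₀ : Fin d → ℝ) (hx₀ : x₀ ∈ I) (y₀ : Fin n → ℝ)
    (y : (Fin d → ℝ) → (Fin n → ℝ))
    (hinit : y x₀ = y₀)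
    (hjac : ∀ x ∈ I, HasFDerivAt y (matLin (fun i j => MvPolynomial.eval (y x) (p i j))) x)
    (hval : ∀ x ∈ I, ∀ i : Fin e, f x i = y x (Fin.castLE hn i))
    (hbound : ∀ x ∈ I, ‖y x‖ ≤ sp.eval ‖x‖)
    (hstar : ∀ x ∈ I, segment ℝ x₀ x ⊆ I) :
    AP I f :=
  gpval_star_domain_mem_ap_general hn I f sp p x₀ y₀ y hinit hjac hval hbound hstar
end
end
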